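/- Let G be a finite simple graph, d ≥ 1 an integer, and T a set of vertices of G such that there are more than 2d vertices in V(G) ∖ T whose neighborhoods contain T. Then T is monochromatic. -/

import Mathlib

variable {V : Type*}

/-- A `d`-cut of a simple graph `G`: a partition `(A, B)` of the vertex set into two
nonempty parts such that every vertex of `A` has at most `d` neighbors in `B` and
every vertex of `B` has at most `d` neighbors in `A`. -/
def IsDCut (G : SimpleGraph V) (d : ℕ) (A B : Set V) : Prop :=
  A.Nonempty ∧ B.Nonempty ∧ Disjoint A B ∧ A ∪ B = Set.univ ∧
    (∀ v ∈ A, (G.neighborSet v ∩ B).ncard ≤ d) ∧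
    (∀ v ∈ B, (G.neighborSet v ∩ A).ncard ≤ d)

/-- A vertex set `T` is monochromatic if every `d`-cut of `G` has `T` entirely on one side. -/
def Monochromatic (G : SimpleGraph V) (d : ℕ) (T : Set V) : Prop :=
  ∀ A B : Set V, IsDCut G d A B → T ⊆ A ∨ T ⊆ B

/-- The edge cut of a cut `(A, B)`: the set of edges of `G` with one endpoint in `A`
and the other endpoint in `B`. -/
def edgeCut (G : SimpleGraph V) (A B : Set V) : Set (Sym2 V) :=
  {e | e ∈ G.edgeSet ∧ ∃ u v, e = s(u, v) ∧ u ∈ A ∧ v ∈ B}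

/-- A minimal `d`-cut: no `d`-cut has an edge cut that is a proper subset of its edge cut. -/
def IsMinimalDCut (G : SimpleGraph V) (d : ℕ) (A B : Set V) : Prop :=
  IsDCut G d A B ∧ ∀ A' B' : Set V, IsDCut G d A' B' → ¬ edgeCut G A' B' ⊂ edgeCut G A B

/-- A maximal `d`-cut: no `d`-cut has an edge cut that properly contains its edge cut. -/
def IsMaximalDCut (G : SimpleGraph V) (d : ℕ) (A B : Set V) : Prop :=
  IsDCut G d A B ∧ ∀ A' B' : Set V, IsDCut G d A' B' → ¬ edgeCut G A B ⊂ edgeCut G A' B'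

/-! If `T` meets both sides of a `d`-cut, pick `t₁ ∈ T ∩ B` and `t₂ ∈ T ∩ A`. Every common
neighbour of `T` on side `A` is a neighbour of `t₁` across the cut, and symmetrically, so each
side holds at most `d` common neighbours and there are at most `2d` of them in total. -/

namespace IsDCut

variable {G : SimpleGraph V} {d : ℕ} {A B : Set V}

theorem isCompl (h : IsDCut G d A B) : IsCompl A B :=
  ⟨h.2.2.1, codisjoint_iff.mpr h.2.2.2.1⟩

theorem symm (h : IsDCut G d A B) : IsDCut G d B A :=
  let ⟨hA, hB, hdisj, huniv, hAd, hBd⟩ := h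
  ⟨hB, hA, hdisj.symm, Set.union_comm A B ▸ huniv, hBd, hAd⟩

theorem ncard_le_add_ncard (h : IsDCut G d A B) (S : Set V) :
    S.ncard ≤ (S ∩ A).ncard + (S ∩ B).ncard := by
  calc S.ncard = (S ∩ A ∪ S ∩ B).ncard := by
        rw [← Set.inter_union_distrib_left, h.2.2.2.1, Set.inter_univ]
    _ ≤ (S ∩ A).ncard + (S ∩ B).ncard := Set.ncard_union_le _ _

theorem ncard_inter_le_of_adj [Finite V] (h : IsDCut G d A B) {t : V} (ht : t ∈ B)
    {S : Set V} (hS : ∀ v ∈ S, G.Adj t v) : (S ∩ A).ncard ≤ d :=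
  calc (S ∩ A).ncard ≤ (G.neighborSet t ∩ A).ncard :=
        Set.ncard_le_ncard (Set.inter_subset_inter_left A hS) (Set.toFinite _)
    _ ≤ d := h.2.2.2.2.2 t ht

end IsDCut

theorem common_neighborhood_monochromatic [Fintype V] (G : SimpleGraph V) (d : ℕ)
    (T : Set V)
    (hmany : 2 * d < {v | v ∉ T ∧ T ⊆ G.neighborSet v}.ncard) :
    Monochromatic G d T := by
  intro A B hcut
  by_contra! ⟨hTA, hTB⟩
  obtain ⟨t₁, ht₁T, ht₁A⟩ := Set.not_subset.mp hTA
  obtain ⟨t₂, ht₂T, ht₂B⟩ := Set.not_subset.mp hTB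
  have ht₁B : t₁ ∈ B := hcut.isCompl.compl_eq ▸ ht₁A
  have ht₂A : t₂ ∈ A := hcut.isCompl.symm.compl_eq ▸ ht₂B
  set S := {v | v ∉ T ∧ T ⊆ G.neighborSet v}
  have hSA : (S ∩ A).ncard ≤ d :=
    hcut.ncard_inter_le_of_adj ht₁B fun v hv ↦ G.adj_symm (hv.2 ht₁T)
  have hSB : (S ∩ B).ncard ≤ d :=
    hcut.symm.ncard_inter_le_of_adj ht₂A fun v hv ↦ G.adj_symm (hv.2 ht₂T)
  have := hcut.ncard_le_add_ncard S
  omega
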